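/- arXiv:1712.04349 — 7 statements merged into one kernel-verified Lean document; each statement's English description precedes it below -/
import Mathlib

section
/- If A ∈ ℂ^{n×n} and B ∈ ℂ^{m×m} have disjoint spectra from each other's negatives (i.e., the spectra of A and -B are disjoint), then for every C ∈ ℂ^{n×m} the Sylvester equation AX + XB = C has a unique solution X ∈ ℂ^{n×m}. -/
/-!
If `A * X = X * D`, then `p(A) * X = X * p(D)` for every polynomial `p`; taking `p = χ_A` and
using Cayley–Hamilton gives `X * χ_A(D) = 0`. By the spectral mapping theorem the spectrum of
`χ_A(D)` is `χ_A(σ(D))`, which avoids `0` when `σ(A)` and `σ(D)` are disjoint, so `χ_A(D)` is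
invertible and `X = 0`. With `D = -B` this shows that `X ↦ A * X + X * B` is injective, hence
bijective on the finite-dimensional space of matrices.
-/

open Polynomial

namespace Matrix

variable {m n R K : Type*} [Fintype m] [Fintype n]

section Intertwining

variable [DecidableEq m] [DecidableEq n] [CommSemiring R]
  {A : Matrix m m R} {D : Matrix n n R} {X : Matrix m n R}

theorem pow_mul_eq_mul_pow_of_mul_eq_mul (h : A * X = X * D) (k : ℕ) :
    A ^ k * X = X * D ^ k := by
  induction k with
  | zero => simp
  | succ k ih => rw [pow_succ, pow_succ, Matrix.mul_assoc, h, ← Matrix.mul_assoc, ih,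
      Matrix.mul_assoc]

theorem aeval_mul_eq_mul_aeval_of_mul_eq_mul (h : A * X = X * D) (p : R[X]) :
    aeval A p * X = X * aeval D p := by
  induction p using Polynomial.induction_on' with
  | add p q hp hq => rw [map_add, map_add, Matrix.add_mul, Matrix.mul_add, hp, hq]
  | monomial k a =>
    rw [aeval_monomial, aeval_monomial, Algebra.algebraMap_eq_smul_one,
      Algebra.algebraMap_eq_smul_one, smul_one_mul, smul_one_mul, Matrix.smul_mul, Matrix.mul_smul,
      pow_mul_eq_mul_pow_of_mul_eq_mul h]

end Intertwining

section Disjoint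

variable [DecidableEq m] [DecidableEq n] [Field K] [IsAlgClosed K]
  {A : Matrix m m K} {D : Matrix n n K}

theorem isUnit_aeval_charpoly_of_disjoint_spectrum
    (h : Disjoint (spectrum K A) (spectrum K D)) : IsUnit (aeval D A.charpoly) := by
  rcases isEmpty_or_nonempty m with hm | hm
  · simp [charpoly_isEmpty]
  have hdeg : 0 < A.charpoly.degree := by
    rw [charpoly_degree_eq_dim]
    exact_mod_cast Fintype.card_pos
  by_contra hU
  obtain ⟨μ, hμD, hμA⟩ : (0 : K) ∈ (eval · A.charpoly) '' spectrum K D := by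
    rw [← spectrum.map_polynomial_aeval_of_degree_pos D _ hdeg]
    exact (spectrum.zero_mem_iff K).2 hU
  exact Set.disjoint_left.1 h (mem_spectrum_iff_isRoot_charpoly.2 hμA) hμD

theorem eq_zero_of_mul_eq_mul_of_disjoint_spectrum (h : Disjoint (spectrum K A) (spectrum K D))
    {X : Matrix m n K} (hX : A * X = X * D) : X = 0 := by
  have hXχ : X * aeval D A.charpoly = (0 : Matrix m n K) * aeval D A.charpoly := by
    rw [← aeval_mul_eq_mul_aeval_of_mul_eq_mul hX, aeval_self_charpoly, Matrix.zero_mul,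
      Matrix.zero_mul]
  let := (isUnit_aeval_charpoly_of_disjoint_spectrum h).invertible
  exact mul_left_injective_of_invertible _ hXχ

end Disjoint

def sylvesterMap [CommSemiring R] (A : Matrix m m R) (B : Matrix n n R) :
    Matrix m n R →ₗ[R] Matrix m n R :=
  mulLeftLinearMap n R A + mulRightLinearMap m R B

@[simp]
theorem sylvesterMap_apply [CommSemiring R] (A : Matrix m m R) (B : Matrix n n R)
    (X : Matrix m n R) : sylvesterMap A B X = A * X + X * B :=
  rfl

theorem sylvesterMap_bijective [DecidableEq m] [DecidableEq n] [Field K] [IsAlgClosed K]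
    {A : Matrix m m K} {B : Matrix n n K} (h : Disjoint (spectrum K A) (spectrum K (-B))) :
    Function.Bijective (sylvesterMap A B) := by
  have hinj : Function.Injective (sylvesterMap A B) := by
    refine (injective_iff_map_eq_zero _).2 fun X hX => ?_
    refine eq_zero_of_mul_eq_mul_of_disjoint_spectrum h ?_
    rw [sylvesterMap_apply] at hX
    rwa [Matrix.mul_neg, eq_neg_iff_add_eq_zero]
  exact ⟨hinj, LinearMap.injective_iff_surjective.1 hinj⟩

end Matrix

/-- If the spectra of `A` and `-B` are disjoint, then for every `C` the Sylvester
equation `A * X + X * B = C` has a unique solution `X`. -/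
theorem sylvester_existence_uniqueness {n m : ℕ}
    (A : Matrix (Fin n) (Fin n) ℂ) (B : Matrix (Fin m) (Fin m) ℂ)
    (h : Disjoint (spectrum ℂ A) (spectrum ℂ (-B))) :
    ∀ C : Matrix (Fin n) (Fin m) ℂ,
      ∃! X : Matrix (Fin n) (Fin m) ℂ, A * X + X * B = C :=
  (Matrix.sylvesterMap_bijective h).existsUnique
end

section
/- Let A δX + δX B = D be a Sylvester equation with solution δX, and let r be a rational function of type (h,h) such that r(A) is defined and r(-B) is invertible. Then there exists a matrix Y of rank at most h·rank(D) with δX − Y = r(A) δX r(−B)^{-1}; in particular, σ_{h·rank(D)+1}(δX) ≤ ‖r(A)‖₂ ‖r(−B)^{-1}‖₂ ‖δX‖₂, where σ_j denotes the j-th largest singular value. -/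
/-! If `A X - X C = D` then `A ^ j X - X C ^ j = ∑_{i<j} A ^ i D C ^ (j-1-i)`, so for a polynomial
`p` of degree at most `h` the matrix `p(A) X - X p(C)` is a sum `∑_{i<h} A ^ i D Nᵢ`, of rank at
most `h · rank D`. For `r = p / q` and `C = -B`, clearing denominators gives
`q(A) (X - r(A) X r(C)⁻¹) p(C) = (q(A) X - X q(C)) p(C) - (p(A) X - X p(C)) q(C)`, because the
terms `X q(C) p(C) = X p(C) q(C)` cancel; this is again one sum of `h` terms `A ^ i D Nᵢ`. So
`Y = X - r(A) X r(C)⁻¹` has rank at most `h · rank D`, and the singular value bound follows from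
the definition of `singval` and submultiplicativity of the spectral norm. -/

open Matrix Polynomial
open scoped Matrix.Norms.L2Operator

/-- The `(j+1)`-st largest singular value of a matrix, characterized as the
2-norm distance to the set of matrices of rank at most `j` (Eckart–Young). -/
noncomputable def singval {α β : Type*} [Fintype α] [Fintype β] [DecidableEq β]
    (j : ℕ) (X : Matrix α β ℂ) : ℝ :=
  sInf {e : ℝ | ∃ Y : Matrix α β ℂ, Y.rank ≤ j ∧ ‖X - Y‖ = e}

open Finset

-- `Ring.inverse b = 0` unless `b` is a unit, and `0` is a unit only in the zero ring.
theorem isUnit_of_isUnit_mul_ringInverse {M₀ : Type*} [MonoidWithZero M₀] {a b : M₀}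
    (h : IsUnit (a * Ring.inverse b)) : IsUnit b := by
  by_contra hb
  rw [Ring.inverse_non_unit b hb, mul_zero, isUnit_zero_iff] at h
  have := subsingleton_of_zero_eq_one h
  exact hb (isUnit_of_subsingleton b)

namespace Matrix

section Rank

variable {K : Type*} [Field K] {m n : Type*} [Fintype n]

theorem rank_add_le (X Y : Matrix m n K) : (X + Y).rank ≤ X.rank + Y.rank := by
  rw [rank, rank, rank, mulVecLin_add]
  refine (Submodule.finrank_mono ?_).trans (Submodule.finrank_add_le_finrank_add_finrank _ _)
  rintro _ ⟨v, rfl⟩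
  exact Submodule.add_mem_sup ⟨v, rfl⟩ ⟨v, rfl⟩

theorem rank_finsetSum_le {ι : Type*} (s : Finset ι) (f : ι → Matrix m n K) :
    (∑ i ∈ s, f i).rank ≤ ∑ i ∈ s, (f i).rank :=
  sum_hom_rel (r := fun (Y : Matrix m n K) k => Y.rank ≤ k) (rank_zero (R := K)).le
    fun _ _ _ h => (rank_add_le _ _).trans (by gcongr)

end Rank

section Displacement

variable {R : Type*} [CommRing R] {m n : Type*} [Fintype m] [Fintype n] [DecidableEq m]
  [DecidableEq n]

theorem pow_mul_sub_mul_pow_eq_sum (A : Matrix m m R) (C : Matrix n n R) (X : Matrix m n R)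
    (j : ℕ) :
    A ^ j * X - X * C ^ j = ∑ i ∈ range j, A ^ i * (A * X - X * C) * C ^ (j - 1 - i) := by
  induction j with
  | zero => simp
  | succ j ih =>
    have split : A ^ (j + 1) * X - X * C ^ (j + 1)
        = A * (A ^ j * X - X * C ^ j) + (A * X - X * C) * C ^ j := by
      simp only [pow_succ', Matrix.mul_sub, Matrix.sub_mul, Matrix.mul_assoc]
      abel
    rw [split, ih, sum_range_succ', Matrix.mul_sum]
    congr 1
    · refine sum_congr rfl fun i _ => ?_
      rw [← Matrix.mul_assoc, ← Matrix.mul_assoc, ← pow_succ']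
      congr 2
      omega
    · simp

theorem exists_aeval_mul_sub_mul_aeval_eq_sum (A : Matrix m m R) (C : Matrix n n R)
    (X : Matrix m n R) {h : ℕ} {p : R[X]} (hp : p.natDegree ≤ h) :
    ∃ N : ℕ → Matrix n n R,
      aeval A p * X - X * aeval C p = ∑ i ∈ range h, A ^ i * (A * X - X * C) * N i := by
  refine ⟨fun i => ∑ j ∈ Ioc i h, p.coeff j • C ^ (j - 1 - i), ?_⟩
  have hp' : p.natDegree < h + 1 := Nat.lt_succ_of_le hp
  simp only [aeval_eq_sum_range' hp', Matrix.sum_mul, Matrix.mul_sum, ← sum_sub_distrib,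
    Matrix.smul_mul, Matrix.mul_smul, ← smul_sub, pow_mul_sub_mul_pow_eq_sum, smul_sum]
  refine sum_comm' fun j i => ?_
  simp only [mem_range, mem_Ioc]
  omega

end Displacement

section Field

variable {K : Type*} [Field K] {m n : Type*} [Fintype m] [Fintype n] [DecidableEq m]

theorem rank_sum_pow_mul_mul_le (A : Matrix m m K) (D : Matrix m n K) (N : ℕ → Matrix n n K)
    (h : ℕ) : (∑ i ∈ range h, A ^ i * D * N i).rank ≤ h * D.rank :=
  calc (∑ i ∈ range h, A ^ i * D * N i).rank
      ≤ ∑ i ∈ range h, (A ^ i * D * N i).rank := rank_finsetSum_le _ _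
    _ ≤ ∑ _i ∈ range h, D.rank :=
      sum_le_sum fun _ _ => (rank_mul_le_left _ _).trans (rank_mul_le_right _ _)
    _ = h * D.rank := by rw [sum_const, card_range, smul_eq_mul]

variable [DecidableEq n]

theorem rank_aeval_mul_mul_aeval_sub_le (A : Matrix m m K) (C : Matrix n n K)
    (X : Matrix m n K) {h : ℕ} {p q : K[X]} (hp : p.natDegree ≤ h) (hq : q.natDegree ≤ h) :
    (aeval A q * X * aeval C p - aeval A p * X * aeval C q).rank
      ≤ h * (A * X - X * C).rank := by
  obtain ⟨Np, hNp⟩ := exists_aeval_mul_sub_mul_aeval_eq_sum A C X hp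
  obtain ⟨Nq, hNq⟩ := exists_aeval_mul_sub_mul_aeval_eq_sum A C X hq
  have hcomm : aeval C q * aeval C p = aeval C p * aeval C q := by
    rw [← map_mul, ← map_mul, mul_comm]
  have split : aeval A q * X * aeval C p - aeval A p * X * aeval C q
      = (aeval A q * X - X * aeval C q) * aeval C p
        - (aeval A p * X - X * aeval C p) * aeval C q := by
    simp only [Matrix.sub_mul, Matrix.mul_assoc, hcomm]
    abel
  rw [split, hNp, hNq, Matrix.sum_mul, Matrix.sum_mul, ← sum_sub_distrib]
  simp only [Matrix.mul_assoc, ← Matrix.mul_sub]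
  simpa only [← Matrix.mul_assoc] using rank_sum_pow_mul_mul_le A (A * X - X * C) _ h

theorem rank_sub_mul_mul_inv_le (A : Matrix m m K) (C : Matrix n n K) (X : Matrix m n K)
    {h : ℕ} {p q : K[X]} (hp : p.natDegree ≤ h) (hq : q.natDegree ≤ h)
    (hqA : IsUnit (aeval A q)) (hrC : IsUnit (aeval C p * (aeval C q)⁻¹)) :
    (X - aeval A p * (aeval A q)⁻¹ * X * (aeval C p * (aeval C q)⁻¹)⁻¹).rank
      ≤ h * (A * X - X * C).rank := by
  have hqC : IsUnit (aeval C q) :=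
    isUnit_of_isUnit_mul_ringInverse (a := aeval C p) (by rwa [← nonsing_inv_eq_ringInverse])
  have hqA_det := (isUnit_iff_isUnit_det _).mp hqA
  have hqC_det := (isUnit_iff_isUnit_det _).mp hqC
  have hpC_det : IsUnit (aeval C p).det := by
    rw [← isUnit_iff_isUnit_det, ← nonsing_inv_mul_cancel_right (aeval C q) (aeval C p) hqC_det]
    exact hrC.mul hqC
  have hcomm : aeval A q * aeval A p = aeval A p * aeval A q := by
    rw [← map_mul, ← map_mul, mul_comm]
  have clear_denominators :
      aeval A q * (X - aeval A p * (aeval A q)⁻¹ * X * (aeval C p * (aeval C q)⁻¹)⁻¹)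
        * aeval C p = aeval A q * X * aeval C p - aeval A p * X * aeval C q := by
    rw [mul_inv_rev, nonsing_inv_nonsing_inv _ hqC_det]
    simp only [Matrix.mul_sub, Matrix.sub_mul, ← Matrix.mul_assoc, hcomm,
      mul_nonsing_inv_cancel_right _ _ hqA_det, nonsing_inv_mul_cancel_right _ _ hpC_det]
  rw [← rank_mul_eq_right_of_isUnit_det _ _ hqA_det, ← rank_mul_eq_left_of_isUnit_det _ _ hpC_det,
    clear_denominators]
  exact rank_aeval_mul_mul_aeval_sub_le A C X hp hq

end Field

end Matrix

theorem singval_le_norm_sub {α β : Type*} [Fintype α] [Fintype β] [DecidableEq β] {j : ℕ}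
    (X : Matrix α β ℂ) {Y : Matrix α β ℂ} (hY : Y.rank ≤ j) : singval j X ≤ ‖X - Y‖ :=
  csInf_le ⟨0, by rintro _ ⟨Z, -, rfl⟩; exact norm_nonneg _⟩ ⟨Y, hY, rfl⟩

/-- Beckermann–Townsend rank-bound framework: if `δX` solves `A δX + δX B = D` and
`r = p/q` is a rational function of type `(h,h)` with `r(A)` defined and `r(-B)`
invertible, then there is `Y` of rank at most `h·rank D` with
`δX - Y = r(A) δX r(-B)⁻¹`, whence `σ_{h·rank D + 1}(δX) ≤ ‖r(A)‖₂‖r(-B)⁻¹‖₂‖δX‖₂`. -/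
theorem rational_displacement_rank_bound {n m h : ℕ}
    (A : Matrix (Fin n) (Fin n) ℂ) (B : Matrix (Fin m) (Fin m) ℂ)
    (D δX : Matrix (Fin n) (Fin m) ℂ)
    (heq : A * δX + δX * B = D)
    (p q : Polynomial ℂ) (hp : p.natDegree ≤ h) (hq : q.natDegree ≤ h)
    (hqA : IsUnit (aeval A q))
    (hrB : IsUnit (aeval (-B) p * (aeval (-B) q)⁻¹)) :
    ∃ Y : Matrix (Fin n) (Fin m) ℂ, Y.rank ≤ h * D.rank ∧
      δX - Y = (aeval A p * (aeval A q)⁻¹) * δX *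
        (aeval (-B) p * (aeval (-B) q)⁻¹)⁻¹ ∧
      singval (h * D.rank) δX ≤
        ‖aeval A p * (aeval A q)⁻¹‖ *
          ‖(aeval (-B) p * (aeval (-B) q)⁻¹)⁻¹‖ * ‖δX‖ := by
  set rA := aeval A p * (aeval A q)⁻¹
  set rB := aeval (-B) p * (aeval (-B) q)⁻¹
  have hD : A * δX - δX * -B = D := by rw [Matrix.mul_neg, sub_neg_eq_add, heq]
  have hY : (δX - rA * δX * rB⁻¹).rank ≤ h * D.rank :=
    hD ▸ rank_sub_mul_mul_inv_le A (-B) δX hp hq hqA hrB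
  refine ⟨_, hY, sub_sub_cancel _ _, ?_⟩
  calc singval (h * D.rank) δX ≤ ‖rA * δX * rB⁻¹‖ := by
        simpa only [sub_sub_cancel] using singval_le_norm_sub δX hY
    _ ≤ ‖rA‖ * ‖δX‖ * ‖rB⁻¹‖ :=
        (l2_opNorm_mul _ _).trans (by gcongr; exact l2_opNorm_mul _ _)
    _ = ‖rA‖ * ‖rB⁻¹‖ * ‖δX‖ := mul_right_comm _ _ _
end

section
/- Let A be stable (all eigenvalues in the open left half plane) and C Hermitian negative semidefinite. Then the unique solution X of the Lyapunov equation AX + XA* = C is Hermitian positive semidefinite. -/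
/-!
The flow `X(t) = e^{tA} X e^{tA*}` has derivative `e^{tA} (AX + XA*) e^{tA*}` and tends to `0`:
the spectrum of `e^A` lies in `exp (spectrum A)`, so its spectral radius is `< 1`, and Gelfand's
formula gives `e^{kA} → 0`. If `AX + XA* = 0` the flow is constant, so `X = 0`; hence the
Lyapunov operator is injective, and bijective by finite dimensionality. If `AX + XA* = C ≤ 0`,
each `t ↦ Re (v* X(t) v)` is nonincreasing with limit `0`, so `Re (v* X v) ≥ 0`; and `X` is
Hermitian because `X*` solves the same equation.
-/

open Matrix NormedSpace Filter Topology
open scoped ComplexOrder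

theorem tendsto_pow_atTop_nhds_zero_of_spectralRadius_lt_one {A : Type*} [NormedRing A]
    [NormedAlgebra ℂ A] [CompleteSpace A] {a : A} (ha : spectralRadius ℂ a < 1) :
    Tendsto (a ^ ·) atTop (𝓝 0) := by
  obtain ⟨q, hρq, hq1⟩ := ENNReal.lt_iff_exists_nnreal_btwn.mp ha
  have hroot : ∀ᶠ k : ℕ in atTop, ‖a ^ k‖ ^ (1 / k : ℝ) < q := by
    filter_upwards [(spectrum.pow_norm_pow_one_div_tendsto_nhds_spectralRadius a).eventually
      (gt_mem_nhds hρq)] with k hk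
    exact (ENNReal.ofReal_lt_iff_lt_toReal (by positivity) ENNReal.coe_ne_top).mp hk
  refine squeeze_zero_norm' ?_ (tendsto_pow_atTop_nhds_zero_of_lt_one q.2 (by exact_mod_cast hq1))
  filter_upwards [hroot, eventually_ne_atTop 0] with k hk hk0
  calc ‖a ^ k‖ = (‖a ^ k‖ ^ (1 / k : ℝ)) ^ k := by
        rw [one_div, Real.rpow_inv_natCast_pow (norm_nonneg _) hk0]
    _ ≤ (q : ℝ) ^ k := pow_le_pow_left₀ (by positivity) hk.le k

section

variable {ι : Type*} [Fintype ι]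

-- Any norm will do: `exp`, `spectrum` and the topology of matrices do not depend on it.
attribute [local instance] Matrix.linftyOpNormedRing Matrix.linftyOpNormedAlgebra

noncomputable def Matrix.reQuadFormCLM (v : ι → ℂ) : Matrix ι ι ℂ →L[ℝ] ℝ :=
  LinearMap.toContinuousLinearMap
    { toFun M := (star v ⬝ᵥ M *ᵥ v).re
      map_add' M N := by simp [add_mulVec, dotProduct_add]
      map_smul' r M := by simp [smul_mulVec, dotProduct_smul, Complex.real_smul] }

variable [DecidableEq ι]

theorem Matrix.pow_mulVec_of_mulVec_eq_smul {R : Type*} [CommSemiring R] {A : Matrix ι ι R}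
    {w : ι → R} {μ : R} (h : A *ᵥ w = μ • w) (k : ℕ) : A ^ k *ᵥ w = μ ^ k • w := by
  induction k with
  | zero => simp
  | succ k ih => rw [pow_succ, ← mulVec_mulVec, h, mulVec_smul, ih, smul_smul, pow_succ']

theorem Matrix.exp_mulVec_of_mulVec_eq_smul {A : Matrix ι ι ℂ} {w : ι → ℂ} {μ : ℂ}
    (h : A *ᵥ w = μ • w) : exp A *ᵥ w = Complex.exp μ • w := by
  let applyTo : Matrix ι ι ℂ →+ (ι → ℂ) := AddMonoidHom.mk' (· *ᵥ w) (fun M N => add_mulVec M N w)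
  have hA := (exp_series_hasSum_exp' (𝕂 := ℂ) A).map applyTo
    (continuous_id.matrix_mulVec continuous_const)
  have hμ := (exp_series_hasSum_exp' (𝕂 := ℂ) μ).smul_const w
  rw [← Complex.exp_eq_exp_ℂ] at hμ
  refine hA.unique (hμ.congr_fun fun k => ?_)
  simp [applyTo, smul_mulVec, pow_mulVec_of_mulVec_eq_smul h, smul_smul]

/-- `A` commutes with `exp A`, so it preserves an eigenspace of `exp A` and has an eigenvector
`w` in it; then `exp A *ᵥ w` is both `z • w` and `Complex.exp μ • w`. -/
theorem Matrix.spectrum_exp_subset (A : Matrix ι ι ℂ) :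
    spectrum ℂ (exp A) ⊆ Complex.exp '' spectrum ℂ A := by
  intro z hz
  rw [← spectrum_toLin', ← Module.End.hasEigenvalue_iff_mem_spectrum] at hz
  have hcomm : Commute (toLin' (exp A)) (toLin' A) :=
    ((Commute.refl A).exp_left).map toLinAlgEquiv'
  let E := Module.End.eigenspace (toLin' (exp A)) z
  have hmaps : Set.MapsTo (toLin' A) E E := Module.End.mapsTo_genEigenspace_of_comm hcomm z 1
  have : Nontrivial E := Submodule.nontrivial_iff_ne_bot.mpr hz
  obtain ⟨μ, hμ⟩ := Module.End.exists_eigenvalue ((toLin' A).restrict hmaps)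
  obtain ⟨⟨w, hwE⟩, hw⟩ := hμ.exists_hasEigenvector
  have hAw : A *ᵥ w = μ • w := congrArg Subtype.val hw.apply_eq_smul
  have hw0 : w ≠ 0 := fun h => hw.2 (Subtype.ext h)
  refine ⟨μ, ?_, ?_⟩
  · rw [← spectrum_toLin', ← Module.End.hasEigenvalue_iff_mem_spectrum]
    exact Module.End.hasEigenvalue_of_hasEigenvector ⟨by simpa using hAw, hw0⟩
  · have hexp : exp A *ᵥ w = z • w := by simpa using Module.End.mem_eigenspace_iff.mp hwE
    exact smul_left_injective ℂ hw0 ((exp_mulVec_of_mulVec_eq_smul hAw).symm.trans hexp)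

theorem Matrix.tendsto_exp_pow_atTop_nhds_zero {A : Matrix ι ι ℂ}
    (hA : ∀ z ∈ spectrum ℂ A, z.re < 0) : Tendsto (exp A ^ ·) atTop (𝓝 0) := by
  refine tendsto_pow_atTop_nhds_zero_of_spectralRadius_lt_one ?_
  rcases (spectrum ℂ (exp A)).eq_empty_or_nonempty with hempty | hne
  · simp [spectralRadius, hempty]
  refine spectrum.spectralRadius_lt_of_forall_lt_of_nonempty hne fun z hz => ?_
  obtain ⟨μ, hμ, rfl⟩ := spectrum_exp_subset A hz
  rw [← NNReal.coe_lt_coe, coe_nnnorm, Complex.norm_exp, NNReal.coe_one, Real.exp_lt_one_iff]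
  exact hA μ hμ

noncomputable def lyapunovFlow (A X : Matrix ι ι ℂ) (t : ℝ) : Matrix ι ι ℂ :=
  exp (t • A) * X * (exp (t • A))ᴴ

theorem lyapunovFlow_zero (A X : Matrix ι ι ℂ) : lyapunovFlow A X 0 = X := by
  simp [lyapunovFlow]

theorem hasDerivAt_lyapunovFlow (A X : Matrix ι ι ℂ) (t : ℝ) :
    HasDerivAt (lyapunovFlow A X) (exp (t • A) * (A * X + X * Aᴴ) * (exp (t • A))ᴴ) t := by
  have hflow : lyapunovFlow A X = fun s : ℝ => exp (s • A) * X * exp (s • Aᴴ) := by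
    ext1 s
    rw [lyapunovFlow, ← exp_conjTranspose, conjTranspose_smul, star_trivial]
  rw [hflow, ← exp_conjTranspose, conjTranspose_smul, star_trivial]
  refine (((hasDerivAt_exp_smul_const A t).mul_const X).mul
    (hasDerivAt_exp_smul_const' Aᴴ t)).congr_deriv ?_
  noncomm_ring

theorem tendsto_lyapunovFlow_natCast {A : Matrix ι ι ℂ} (hA : ∀ z ∈ spectrum ℂ A, z.re < 0)
    (X : Matrix ι ι ℂ) : Tendsto (fun k : ℕ => lyapunovFlow A X k) atTop (𝓝 0) := by
  have hcont : Continuous fun M : Matrix ι ι ℂ => M * X * Mᴴ := by fun_prop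
  have hpow (k : ℕ) : exp ((k : ℝ) • A) = exp A ^ k := by
    rw [Nat.cast_smul_eq_nsmul, Matrix.exp_nsmul]
  simpa only [lyapunovFlow, hpow, Function.comp_def, zero_mul, conjTranspose_zero, mul_zero] using
    (hcont.tendsto 0).comp (tendsto_exp_pow_atTop_nhds_zero hA)

theorem eq_zero_of_lyapunov_eq_zero {A X : Matrix ι ι ℂ} (hA : ∀ z ∈ spectrum ℂ A, z.re < 0)
    (hX : A * X + X * Aᴴ = 0) : X = 0 := by
  have hderiv (t : ℝ) : HasDerivAt (lyapunovFlow A X) 0 t := by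
    simpa [hX] using hasDerivAt_lyapunovFlow A X t
  have hconst (t : ℝ) : lyapunovFlow A X t = X :=
    (is_const_of_deriv_eq_zero (fun s => (hderiv s).differentiableAt)
      (fun s => (hderiv s).deriv) t 0).trans (lyapunovFlow_zero A X)
  have hlim := tendsto_lyapunovFlow_natCast hA X
  simp only [hconst] at hlim
  exact tendsto_nhds_unique tendsto_const_nhds hlim

theorem lyapunov_bijective {A : Matrix ι ι ℂ} (hA : ∀ z ∈ spectrum ℂ A, z.re < 0) :
    Function.Bijective fun X => A * X + X * Aᴴ := by
  let L : Matrix ι ι ℂ →ₗ[ℂ] Matrix ι ι ℂ := LinearMap.mulLeft ℂ A + LinearMap.mulRight ℂ Aᴴ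
  have hinj : Function.Injective L := by
    rw [← LinearMap.ker_eq_bot, LinearMap.ker_eq_bot']
    exact fun X hX => eq_zero_of_lyapunov_eq_zero hA hX
  exact ⟨hinj, LinearMap.injective_iff_surjective.mp hinj⟩

theorem isHermitian_of_lyapunov {A C X : Matrix ι ι ℂ} (hA : ∀ z ∈ spectrum ℂ A, z.re < 0)
    (hC : C.IsHermitian) (hX : A * X + X * Aᴴ = C) : X.IsHermitian :=
  (lyapunov_bijective hA).injective <| by
    change A * Xᴴ + Xᴴ * Aᴴ = A * X + X * Aᴴ
    rw [hX, ← hC.eq, ← hX, conjTranspose_add, conjTranspose_mul, conjTranspose_mul,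
      conjTranspose_conjTranspose, add_comm]

theorem re_dotProduct_mulVec_nonneg_of_lyapunov {A C X : Matrix ι ι ℂ}
    (hA : ∀ z ∈ spectrum ℂ A, z.re < 0) (hC : (-C).PosSemidef) (hX : A * X + X * Aᴴ = C)
    (v : ι → ℂ) : 0 ≤ (star v ⬝ᵥ X *ᵥ v).re := by
  set φ := reQuadFormCLM v
  have hderiv (t : ℝ) :
      HasDerivAt (φ ∘ lyapunovFlow A X) (φ (exp (t • A) * C * (exp (t • A))ᴴ)) t := by
    have h := hasDerivAt_lyapunovFlow A X t
    rw [hX] at h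
    exact φ.hasFDerivAt.comp_hasDerivAt t h
  have hnonpos (t : ℝ) : φ (exp (t • A) * C * (exp (t • A))ᴴ) ≤ 0 := by
    have h := (hC.mul_mul_conjTranspose_same (exp (t • A))).dotProduct_mulVec_nonneg v
    simpa [φ, reQuadFormCLM, neg_mulVec] using (Complex.nonneg_iff.mp h).1
  have hanti : Antitone (φ ∘ lyapunovFlow A X) :=
    antitone_of_deriv_nonpos (fun t => (hderiv t).differentiableAt)
      fun t => (hderiv t).deriv ▸ hnonpos t
  have hlim : Tendsto (fun k : ℕ => φ (lyapunovFlow A X k)) atTop (𝓝 0) := by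
    simpa only [map_zero, Function.comp_def] using
      (φ.continuous.tendsto 0).comp (tendsto_lyapunovFlow_natCast hA X)
  simpa [φ, reQuadFormCLM, lyapunovFlow_zero] using
    le_of_tendsto' hlim fun k => hanti k.cast_nonneg

theorem posSemidef_of_lyapunov {A C X : Matrix ι ι ℂ} (hA : ∀ z ∈ spectrum ℂ A, z.re < 0)
    (hC : (-C).PosSemidef) (hX : A * X + X * Aᴴ = C) : X.PosSemidef := by
  have hXh : X.IsHermitian := isHermitian_of_lyapunov hA (by simpa using hC.1.neg) hX
  exact .of_dotProduct_mulVec_nonneg hXh fun v => Complex.nonneg_iff.mpr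
    ⟨re_dotProduct_mulVec_nonneg_of_lyapunov hA hC hX v,
      (hXh.im_star_dotProduct_mulVec_self v).symm⟩

end

/-- If `A` is stable (all eigenvalues in the open left half plane) and `C` is
Hermitian negative semidefinite, then the Lyapunov equation `A X + X Aᴴ = C` has a
unique solution, and this solution is Hermitian positive semidefinite. -/
theorem lyapunov_stable_posSemidef {n : ℕ}
    (A C : Matrix (Fin n) (Fin n) ℂ)
    (hA : ∀ z ∈ spectrum ℂ A, z.re < 0)
    (hC : (-C).PosSemidef) :
    (∃! X : Matrix (Fin n) (Fin n) ℂ, A * X + X * Aᴴ = C) ∧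
      ∀ X : Matrix (Fin n) (Fin n) ℂ, A * X + X * Aᴴ = C → X.PosSemidef :=
  ⟨(lyapunov_bijective hA).existsUnique C, fun _ hX => posSemidef_of_lyapunov hA hC hX⟩
end

section
/- Let A be a matrix each of whose HSS block rows and columns (with respect to a cluster tree T_p) admits a rank-k approximation with 2-norm error at most ε. Let U, V be block diagonal matrices conforming with T_p with U*U = V*V = I. Then every HSS block row and column of UU*A admits a rank-k approximation with 2-norm error at most ε, and likewise for U*AV (with respect to the correspondingly reduced cluster tree). -/
open Matrix
open scoped Matrix.Norms.L2Operator

/-- A cluster tree of depth `p` on `{0, …, n-1}`, encoded by the monotone sequence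
of breakpoints of its leaf partition `n = n₁ + ⋯ + n_{2^p}`.  The node `I_i^ℓ`
(level `ℓ`, index `i`) is the interval `[N(i·2^{p-ℓ}), N((i+1)·2^{p-ℓ}))`. -/
structure ClusterTree (n p : ℕ) where
  N : ℕ → ℕ
  mono : Monotone N
  zero : N 0 = 0
  top : N (2 ^ p) = n

namespace ClusterTree

variable {n m p : ℕ}

/-- Membership of an index `j` in the node `I_i^ℓ` of the cluster tree. -/
def mem (T : ClusterTree n p) (ℓ i : ℕ) (j : Fin n) : Prop :=
  T.N (i * 2 ^ (p - ℓ)) ≤ j.val ∧ j.val < T.N ((i + 1) * 2 ^ (p - ℓ))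

instance (T : ClusterTree n p) (ℓ i : ℕ) (j : Fin n) : Decidable (T.mem ℓ i j) := by
  unfold ClusterTree.mem; infer_instance

/-- The HSS block row `A(I_i^ℓ, I ∖ I_i^ℓ)`. -/
def blockRow (T : ClusterTree n p) (A : Matrix (Fin n) (Fin n) ℂ) (ℓ i : ℕ) :
    Matrix {j : Fin n // T.mem ℓ i j} {j : Fin n // ¬ T.mem ℓ i j} ℂ :=
  Matrix.of fun a c => A a.1 c.1

/-- The HSS block column `A(I ∖ I_i^ℓ, I_i^ℓ)`. -/
def blockCol (T : ClusterTree n p) (A : Matrix (Fin n) (Fin n) ℂ) (ℓ i : ℕ) :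
    Matrix {j : Fin n // ¬ T.mem ℓ i j} {j : Fin n // T.mem ℓ i j} ℂ :=
  Matrix.of fun a c => A a.1 c.1

/-- `A` is a `(T_p, k)`-HSS matrix: every HSS block row and column has rank ≤ `k`. -/
def IsHSS (T : ClusterTree n p) (k : ℕ) (A : Matrix (Fin n) (Fin n) ℂ) : Prop :=
  ∀ ℓ i : ℕ, 1 ≤ ℓ → ℓ ≤ p → i < 2 ^ ℓ →
    (T.blockRow A ℓ i).rank ≤ k ∧ (T.blockCol A ℓ i).rank ≤ k

/-- `A` is an `ε`-`(T_p, k)`-HSS matrix: every HSS block row and column admits a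
rank-`k` approximation with 2-norm error at most `ε`. -/
def IsEpsHSS (T : ClusterTree n p) (k : ℕ) (ε : ℝ)
    (A : Matrix (Fin n) (Fin n) ℂ) : Prop :=
  ∀ ℓ i : ℕ, 1 ≤ ℓ → ℓ ≤ p → i < 2 ^ ℓ →
    (∃ Y, Y.rank ≤ k ∧ ‖T.blockRow A ℓ i - Y‖ ≤ ε) ∧
    (∃ Y, Y.rank ≤ k ∧ ‖T.blockCol A ℓ i - Y‖ ≤ ε)

/-- A rectangular matrix is block diagonal conforming with the pair of cluster
trees `T`, `S` (rows clustered by `T`, columns by `S`): entries vanish unless row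
and column indices lie in corresponding leaf blocks. -/
def Conforms (T : ClusterTree n p) (S : ClusterTree m p)
    (U : Matrix (Fin n) (Fin m) ℂ) : Prop :=
  ∀ (i : Fin n) (j : Fin m),
    (∀ a : ℕ, a < 2 ^ p → ¬(T.mem p a i ∧ S.mem p a j)) → U i j = 0

end ClusterTree

/-!
Conformity makes `U` and `V` block diagonal with respect to every node and its complement,
not only the leaves. Hence, writing `I` for a node of `T` and `J` for the matching node of
`S`, the HSS block row of `U U* A` at `I` is `(U U*)(I, I) · A(I, Iᶜ)`, and that of `U* A V`
at `J` is `U(I, J)* · A(I, Iᶜ) · V(Iᶜ, Jᶜ)`; block columns factor the same way. The outer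
factors are submatrices of operators of 2-norm at most one, and multiplying by such factors
preserves the existence of a rank-`k` approximation with error `ε`.
-/

namespace Matrix

theorem submatrix_mul_of_forall_not_mem_eq_zero {α l m o l' o' : Type*} [Fintype m]
    [NonUnitalNonAssocSemiring α] (P : m → Prop) [DecidablePred P] (M : Matrix l m α)
    (N : Matrix m o α) (e₁ : l' → l) (e₃ : o' → o)
    (h : ∀ r c s, ¬ P c → M (e₁ r) c * N c (e₃ s) = 0) :
    (M * N).submatrix e₁ e₃ =
      M.submatrix e₁ (Subtype.val : {c // P c} → m) * N.submatrix Subtype.val e₃ := by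
  ext r s
  simp only [submatrix_apply, mul_apply]
  rw [← Fintype.sum_subtype_add_sum_subtype P,
    Fintype.sum_eq_zero _ fun c : {c // ¬ P c} => h r c s c.2, add_zero]
  rfl

variable {𝕜 : Type*} [RCLike 𝕜] {l m n o : Type*} [Fintype l] [Fintype m] [Fintype n]
  [Fintype o]

theorem l2_opNorm_one_le [DecidableEq n] : ‖(1 : Matrix n n 𝕜)‖ ≤ 1 := by
  rw [← diagonal_one, l2_opNorm_diagonal]
  exact pi_norm_le_iff_of_nonneg zero_le_one |>.2 fun _ => by simp

theorem l2_opNorm_le_one_of_conjTranspose_mul_self_eq_one [DecidableEq n] {A : Matrix m n 𝕜}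
    (h : Aᴴ * A = 1) : ‖A‖ ≤ 1 := by
  have hA : ‖A‖ * ‖A‖ ≤ 1 := by
    rw [← l2_opNorm_conjTranspose_mul_self, h]
    exact l2_opNorm_one_le
  nlinarith [norm_nonneg A]

theorem l2_opNorm_one_submatrix_id_le [DecidableEq m] [DecidableEq n] {f : n → m}
    (hf : f.Injective) : ‖(1 : Matrix m m 𝕜).submatrix id f‖ ≤ 1 := by
  refine l2_opNorm_le_one_of_conjTranspose_mul_self_eq_one ?_
  rw [conjTranspose_submatrix, conjTranspose_one,
    ← submatrix_mul _ _ _ _ _ Function.bijective_id, Matrix.one_mul, submatrix_one _ hf]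

theorem l2_opNorm_submatrix_le [DecidableEq l] [DecidableEq m] [DecidableEq n] [DecidableEq o]
    (A : Matrix m o 𝕜) {e : l → m} {f : n → o} (he : e.Injective) (hf : f.Injective) :
    ‖A.submatrix e f‖ ≤ ‖A‖ := by
  have hP := l2_opNorm_one_submatrix_id_le (𝕜 := 𝕜) he
  have hQ := l2_opNorm_one_submatrix_id_le (𝕜 := 𝕜) hf
  have hsplit : A.submatrix e f =
      ((1 : Matrix m m 𝕜).submatrix id e)ᴴ * A * (1 : Matrix o o 𝕜).submatrix id f := by
    ext r s
    simp [mul_apply, one_apply]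
  calc ‖A.submatrix e f‖
      ≤ ‖((1 : Matrix m m 𝕜).submatrix id e)ᴴ‖ * ‖A‖ *
          ‖(1 : Matrix o o 𝕜).submatrix id f‖ := by
        rw [hsplit]
        exact (l2_opNorm_mul _ _).trans (by gcongr; exact l2_opNorm_mul _ _)
    _ ≤ 1 * ‖A‖ * 1 := by rw [l2_opNorm_conjTranspose]; gcongr
    _ = ‖A‖ := by ring

end Matrix

def Matrix.HasRankApprox {𝕜 m n : Type*} [RCLike 𝕜] [Fintype m] [Fintype n] [DecidableEq n]
    (k : ℕ) (ε : ℝ) (B : Matrix m n 𝕜) : Prop :=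
  ∃ Y : Matrix m n 𝕜, Y.rank ≤ k ∧ ‖B - Y‖ ≤ ε

namespace Matrix.HasRankApprox

variable {𝕜 : Type*} [RCLike 𝕜] {l m n o : Type*} [Fintype l] [Fintype m] [Fintype n]
  [Fintype o] [DecidableEq n] {k : ℕ} {ε : ℝ} {B : Matrix m n 𝕜}

theorem mul_left [DecidableEq m] (hB : HasRankApprox k ε B) {L : Matrix l m 𝕜}
    (hL : ‖L‖ ≤ 1) :
    HasRankApprox k ε (L * B) := by
  obtain ⟨Y, hYk, hYε⟩ := hB
  refine ⟨L * Y, (rank_mul_le_right L Y).trans hYk, ?_⟩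
  calc ‖L * B - L * Y‖ = ‖L * (B - Y)‖ := by rw [Matrix.mul_sub]
    _ ≤ ‖L‖ * ‖B - Y‖ := l2_opNorm_mul _ _
    _ ≤ 1 * ε := by gcongr
    _ = ε := one_mul ε

theorem mul_right [DecidableEq o] (hB : HasRankApprox k ε B) {R : Matrix n o 𝕜}
    (hR : ‖R‖ ≤ 1) :
    HasRankApprox k ε (B * R) := by
  obtain ⟨Y, hYk, hYε⟩ := hB
  refine ⟨Y * R, (rank_mul_le_left Y R).trans hYk, ?_⟩
  calc ‖B * R - Y * R‖ = ‖(B - Y) * R‖ := by rw [Matrix.sub_mul]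
    _ ≤ ‖B - Y‖ * ‖R‖ := l2_opNorm_mul _ _
    _ ≤ ε * 1 := by gcongr; exact (norm_nonneg _).trans hYε
    _ = ε := mul_one ε

end Matrix.HasRankApprox

namespace ClusterTree

variable {n m p : ℕ}

theorem mem_iff_of_mem_leaf (T : ClusterTree n p) {ℓ i a : ℕ} {j : Fin n} (h : T.mem p a j) :
    T.mem ℓ i j ↔ i * 2 ^ (p - ℓ) ≤ a ∧ a < (i + 1) * 2 ^ (p - ℓ) := by
  obtain ⟨ha, ha'⟩ : T.N a ≤ j ∧ j < T.N (a + 1) := by simpa [mem] using h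
  constructor
  · rintro ⟨hlo, hhi⟩
    exact ⟨Nat.lt_succ_iff.1 (T.mono.reflect_lt (hlo.trans_lt ha')),
      T.mono.reflect_lt (ha.trans_lt hhi)⟩
  · rintro ⟨hlo, hhi⟩
    exact ⟨(T.mono hlo).trans ha, ha'.trans_le (T.mono hhi)⟩

theorem Conforms.eq_zero_of_not_mem_iff {T : ClusterTree n p} {S : ClusterTree m p}
    {U : Matrix (Fin n) (Fin m) ℂ} (hU : T.Conforms S U) {ℓ i : ℕ} {r : Fin n} {c : Fin m}
    (h : ¬ (T.mem ℓ i r ↔ S.mem ℓ i c)) : U r c = 0 :=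
  hU r c fun _ _ ⟨hr, hc⟩ => h <| by rw [T.mem_iff_of_mem_leaf hr, S.mem_iff_of_mem_leaf hc]

theorem Conforms.mul_conjTranspose_eq_zero {T : ClusterTree n p} {S : ClusterTree m p}
    {U : Matrix (Fin n) (Fin m) ℂ} (hU : T.Conforms S U) {ℓ i : ℕ} {r c : Fin n}
    (h : ¬ (T.mem ℓ i r ↔ T.mem ℓ i c)) : (U * Uᴴ) r c = 0 := by
  rw [mul_apply]
  refine Finset.sum_eq_zero fun s _ => ?_
  by_cases hrs : T.mem ℓ i r ↔ S.mem ℓ i s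
  · rw [conjTranspose_apply, hU.eq_zero_of_not_mem_iff fun hcs => h (hrs.trans hcs.symm),
      star_zero, mul_zero]
  · rw [hU.eq_zero_of_not_mem_iff hrs, zero_mul]

theorem blockRow_eq_submatrix (T : ClusterTree n p) (A : Matrix (Fin n) (Fin n) ℂ) (ℓ i : ℕ) :
    T.blockRow A ℓ i = A.submatrix Subtype.val Subtype.val :=
  rfl

theorem blockCol_eq_submatrix (T : ClusterTree n p) (A : Matrix (Fin n) (Fin n) ℂ) (ℓ i : ℕ) :
    T.blockCol A ℓ i = A.submatrix Subtype.val Subtype.val :=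
  rfl

section BlockFactorization

variable {T : ClusterTree n p} {S : ClusterTree m p} {U V : Matrix (Fin n) (Fin m) ℂ}
  (A : Matrix (Fin n) (Fin n) ℂ) (ℓ i : ℕ)

theorem blockRow_mul_conjTranspose_mul (hU : T.Conforms S U) :
    T.blockRow (U * Uᴴ * A) ℓ i =
      (U * Uᴴ).submatrix Subtype.val Subtype.val * T.blockRow A ℓ i := by
  rw [blockRow_eq_submatrix, submatrix_mul_of_forall_not_mem_eq_zero (T.mem ℓ i)]
  · rfl
  · intro r c s hc
    rw [hU.mul_conjTranspose_eq_zero fun h => hc (h.1 r.2), zero_mul]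

theorem blockCol_mul_conjTranspose_mul (hU : T.Conforms S U) :
    T.blockCol (U * Uᴴ * A) ℓ i =
      (U * Uᴴ).submatrix Subtype.val Subtype.val * T.blockCol A ℓ i := by
  rw [blockCol_eq_submatrix, submatrix_mul_of_forall_not_mem_eq_zero (¬ T.mem ℓ i ·)]
  · rfl
  · intro r c s hc
    rw [hU.mul_conjTranspose_eq_zero fun h => r.2 (h.2 (not_not.1 hc)), zero_mul]

theorem blockRow_conjTranspose_mul_mul (hU : T.Conforms S U) (hV : T.Conforms S V) :
    S.blockRow (Uᴴ * A * V) ℓ i =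
      Uᴴ.submatrix (Subtype.val : {j // S.mem ℓ i j} → _)
          (Subtype.val : {j // T.mem ℓ i j} → _) * T.blockRow A ℓ i *
        V.submatrix (Subtype.val : {j // ¬ T.mem ℓ i j} → _)
          (Subtype.val : {j // ¬ S.mem ℓ i j} → _) := by
  rw [blockRow_eq_submatrix, submatrix_mul_of_forall_not_mem_eq_zero (¬ T.mem ℓ i ·),
    submatrix_mul_of_forall_not_mem_eq_zero (T.mem ℓ i)]
  · rfl
  · intro r c s hc
    rw [conjTranspose_apply, hU.eq_zero_of_not_mem_iff fun h => hc (h.2 r.2), star_zero,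
      zero_mul]
  · intro r c s hc
    rw [hV.eq_zero_of_not_mem_iff fun h => s.2 (h.1 (not_not.1 hc)), mul_zero]

theorem blockCol_conjTranspose_mul_mul (hU : T.Conforms S U) (hV : T.Conforms S V) :
    S.blockCol (Uᴴ * A * V) ℓ i =
      Uᴴ.submatrix (Subtype.val : {j // ¬ S.mem ℓ i j} → _)
          (Subtype.val : {j // ¬ T.mem ℓ i j} → _) * T.blockCol A ℓ i *
        V.submatrix (Subtype.val : {j // T.mem ℓ i j} → _)
          (Subtype.val : {j // S.mem ℓ i j} → _) := by
  rw [blockCol_eq_submatrix, submatrix_mul_of_forall_not_mem_eq_zero (T.mem ℓ i),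
    submatrix_mul_of_forall_not_mem_eq_zero (¬ T.mem ℓ i ·)]
  · rfl
  · intro r c s hc
    rw [conjTranspose_apply, hU.eq_zero_of_not_mem_iff fun h => r.2 (h.1 (not_not.1 hc)),
      star_zero, zero_mul]
  · intro r c s hc
    rw [hV.eq_zero_of_not_mem_iff fun h => hc (h.2 s.2), mul_zero]

end BlockFactorization

end ClusterTree

open ClusterTree in
/-- If every HSS block row/column of `A` admits a rank-`k` approximation with
2-norm error ≤ `ε`, and `U`, `V` are block diagonal matrices conforming with the
cluster trees with orthonormal columns (`U*U = V*V = I`), then the same holds for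
`U U* A` (w.r.t. the tree `T`) and for `U* A V` (w.r.t. the reduced tree `S`). -/
theorem epsHSS_of_projections {n m p k : ℕ} (ε : ℝ)
    (T : ClusterTree n p) (S : ClusterTree m p)
    (A : Matrix (Fin n) (Fin n) ℂ) (hA : T.IsEpsHSS k ε A)
    (U V : Matrix (Fin n) (Fin m) ℂ)
    (hUconf : T.Conforms S U) (hVconf : T.Conforms S V)
    (hU : Uᴴ * U = 1) (hV : Vᴴ * V = 1) :
    T.IsEpsHSS k ε (U * Uᴴ * A) ∧ S.IsEpsHSS k ε (Uᴴ * A * V) := by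
  have hUn : ‖U‖ ≤ 1 := l2_opNorm_le_one_of_conjTranspose_mul_self_eq_one hU
  have hVn : ‖V‖ ≤ 1 := l2_opNorm_le_one_of_conjTranspose_mul_self_eq_one hV
  have hUHn : ‖Uᴴ‖ ≤ 1 := by rwa [l2_opNorm_conjTranspose]
  have hUUn : ‖U * Uᴴ‖ ≤ 1 :=
    (l2_opNorm_mul _ _).trans (mul_le_one₀ hUn (norm_nonneg _) hUHn)
  have hsub {a b : Type} [Fintype a] [Fintype b] [DecidableEq a] [DecidableEq b]
      {M : Matrix a b ℂ} (hM : ‖M‖ ≤ 1) {P : a → Prop} {Q : b → Prop} [DecidablePred P]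
      [DecidablePred Q] :
      ‖M.submatrix (Subtype.val : {x // P x} → a) (Subtype.val : {y // Q y} → b)‖ ≤ 1 :=
    (l2_opNorm_submatrix_le M Subtype.val_injective Subtype.val_injective).trans hM
  refine ⟨fun ℓ i h₁ h₂ h₃ => ?_, fun ℓ i h₁ h₂ h₃ => ?_⟩ <;>
    obtain ⟨hRow, hCol⟩ := hA ℓ i h₁ h₂ h₃
  · rw [blockRow_mul_conjTranspose_mul A ℓ i hUconf,
      blockCol_mul_conjTranspose_mul A ℓ i hUconf]
    exact ⟨HasRankApprox.mul_left hRow (hsub hUUn), HasRankApprox.mul_left hCol (hsub hUUn)⟩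
  · rw [blockRow_conjTranspose_mul_mul A ℓ i hUconf hVconf,
      blockCol_conjTranspose_mul_mul A ℓ i hUconf hVconf]
    exact ⟨(HasRankApprox.mul_left hRow (hsub hUHn)).mul_right (hsub hVn),
      (HasRankApprox.mul_left hCol (hsub hUHn)).mul_right (hsub hVn)⟩
end

section
/- Let A be a Hermitian positive definite 2×2-block matrix with off-diagonal block A₂₁ = UΣV* (a singular value decomposition). Then A₀ := diag(A₁₁ + VΣV*, A₂₂ + UΣU*) is Hermitian positive definite, and A = A₀ + wΣw̃* where w = [V; −U], w̃ = [−V; U]; moreover if A is (T_p,k)-HSS then so is A₀. -/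
open Matrix
open scoped Matrix.Norms.L2Operator

open scoped ComplexOrder

/-!
Put `W = V - U`, so that `A₀ = A + W Σ Wᴴ`. As `Σ ≥ 0`, `A₀` is a positive semidefinite
perturbation of `A`, hence positive definite. On the two off-diagonal blocks the correction is
`-V Σ Uᴴ` and `-U Σ Vᴴ`, which cancel `A₁₂` and `A₂₁`; on the diagonal blocks it adds `V Σ Vᴴ`
and `U Σ Uᴴ`. Since `Uᴴ U = 1`, the first block row of `A₀` is the first block row of `A` times
`D + U Vᴴ` (`D` the projection onto the first block), and this factor sends no column of a node
`I` inside the first block to a column outside `I`. So every HSS block row `A₀(I, Iᶜ)` is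
`A(I, Iᶜ)` times a matrix, and the same holds in the second block with `U` and `V` exchanged.
Block columns follow by Hermitian symmetry.
-/

namespace Matrix

variable {ι κ R : Type*}

def blockProj [DecidableEq ι] [Zero R] [One R] (P : ι → Prop) [DecidablePred P] :
    Matrix ι ι R :=
  diagonal fun i => if P i then 1 else 0

section BlockProj

variable [DecidableEq ι] (P Q : ι → Prop) [DecidablePred P] [DecidablePred Q]

theorem blockProj_apply_of_ne [Ring R] {i j : ι} (h : i ≠ j) :
    (blockProj P : Matrix ι ι R) i j = 0 :=
  diagonal_apply_ne _ h

theorem blockProj_add_blockProj_not [Ring R] :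
    (blockProj P + blockProj (¬ P ·) : Matrix ι ι R) = 1 := by
  rw [blockProj, blockProj, diagonal_add, ← diagonal_one]
  congr 1; ext i; by_cases h : P i <;> simp [h]

theorem blockProj_not_not [Ring R] :
    (blockProj (¬ ¬ P ·) : Matrix ι ι R) = blockProj P := by
  simp only [blockProj, not_not]

theorem conjTranspose_blockProj [Ring R] [StarRing R] :
    (blockProj P : Matrix ι ι R)ᴴ = blockProj P := by
  rw [blockProj, diagonal_conjTranspose]
  congr 1; ext i; by_cases h : P i <;> simp [h]

variable [Fintype ι] [Ring R]

theorem blockProj_mul_apply {α : Type*} (X : Matrix ι α R) (i : ι) (j : α) :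
    ((blockProj P : Matrix ι ι R) * X) i j = if P i then X i j else 0 := by
  rw [blockProj, diagonal_mul, ite_mul, one_mul, zero_mul]

theorem blockProj_mul_mul_blockProj_apply (X : Matrix ι ι R) (i j : ι) :
    ((blockProj P : Matrix ι ι R) * X * (blockProj Q : Matrix ι ι R)) i j =
      if P i ∧ Q j then X i j else 0 := by
  rw [blockProj, blockProj, mul_diagonal, diagonal_mul]
  by_cases hi : P i <;> by_cases hj : Q j <;> simp [hi, hj]

theorem blockProj_mul_mul_blockProj_congr {X Y : Matrix ι ι R}
    (h : ∀ i j, P i → Q j → X i j = Y i j) :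
    (blockProj P : Matrix ι ι R) * X * (blockProj Q : Matrix ι ι R) =
      (blockProj P : Matrix ι ι R) * Y * (blockProj Q : Matrix ι ι R) := by
  ext i j
  simp only [blockProj_mul_mul_blockProj_apply]
  split_ifs with hij
  exacts [h i j hij.1 hij.2, rfl]

theorem blockProj_mul_eq_zero {α : Type*} {X : Matrix ι α R}
    (hX : ∀ i, P i → ∀ c, X i c = 0) : (blockProj P : Matrix ι ι R) * X = 0 := by
  ext i c
  rw [blockProj_mul_apply]
  split_ifs with h
  exacts [hX i h c, rfl]

theorem blockProj_mul_eq_self {α : Type*} {X : Matrix ι α R}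
    (hX : ∀ i, ¬ P i → ∀ c, X i c = 0) : (blockProj P : Matrix ι ι R) * X = X := by
  ext i c
  rw [blockProj_mul_apply]
  split_ifs with h
  exacts [rfl, (hX i h c).symm]

end BlockProj

theorem rank_submatrix_mul_le {α : Type*} [Fintype ι] [CommRing R] [Nontrivial R]
    (A M : Matrix ι ι R) (Q : ι → Prop) [DecidablePred Q] (r : α → ι)
    (hM : ∀ t j, Q t → ¬ Q j → M t j = 0) :
    ((A * M).submatrix r (Subtype.val : {j // ¬ Q j} → ι)).rank ≤
      (A.submatrix r (Subtype.val : {j // ¬ Q j} → ι)).rank := by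
  have hfactor : (A * M).submatrix r (Subtype.val : {j // ¬ Q j} → ι) =
      A.submatrix r Subtype.val *
        M.submatrix (Subtype.val : {j // ¬ Q j} → ι) (Subtype.val : {j // ¬ Q j} → ι) := by
    ext a j
    simp only [submatrix_apply, mul_apply]
    rw [← Fintype.sum_subtype_add_sum_subtype Q,
      Finset.sum_eq_zero fun t _ => by rw [hM t j t.2 j.2, mul_zero], zero_add]
    rfl
  rw [hfactor]
  exact rank_mul_le_left _ _

section Splitting

variable [Fintype κ] [Ring R] [StarRing R]
  {D E A : Matrix ι ι R} {U V : Matrix ι κ R} {S : Matrix κ κ R}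

theorem sub_mul_mul_conjTranspose_sub_comm :
    (V - U) * S * (V - U)ᴴ = (U - V) * S * (U - V)ᴴ := by
  rw [← neg_sub U V, conjTranspose_neg, Matrix.neg_mul, Matrix.neg_mul, Matrix.mul_neg, neg_neg]

variable [Fintype ι] [DecidableEq ι]

theorem mul_add_sub_mul_conjTranspose_sub_mul (hDE : D + E = 1) (hE : Eᴴ = E)
    (hDU : D * U = 0) (hDV : D * V = V) (hA : D * A * E = V * S * Uᴴ) :
    D * (A + (V - U) * S * (V - U)ᴴ) * E = 0 := by
  have hEW : (V - U)ᴴ * E = -Uᴴ := by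
    have h : E * (V - U) = -U := by
      rw [eq_sub_of_add_eq' hDE, Matrix.sub_mul, Matrix.one_mul, Matrix.mul_sub, hDU, hDV,
        sub_zero]
      abel
    simpa only [conjTranspose_mul, hE, conjTranspose_neg] using congrArg conjTranspose h
  rw [Matrix.mul_add, Matrix.add_mul, hA]
  simp only [Matrix.mul_assoc]
  rw [hEW, ← Matrix.mul_assoc D, Matrix.mul_sub, hDU, hDV, sub_zero, Matrix.mul_neg,
    Matrix.mul_neg, add_neg_cancel]

variable [DecidableEq κ]

/-- The paper's `A₁₁ + VΣV* = [A₁₁, VΣU*]·[I; UV*]`, with `D` cutting out the first block row. -/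
theorem mul_add_sub_mul_conjTranspose_sub (hDE : D + E = 1) (hDU : D * U = 0)
    (hDV : D * V = V) (hU : Uᴴ * U = 1) (hA : D * A * E = V * S * Uᴴ) :
    D * (A + (V - U) * S * (V - U)ᴴ) = D * A * (D + U * Vᴴ) := by
  have hDAU : D * A * U = V * S :=
    calc D * A * U = D * A * E * U := by
          rw [Matrix.mul_assoc _ E, eq_sub_of_add_eq' hDE, Matrix.sub_mul, Matrix.one_mul, hDU,
            sub_zero]
      _ = V * S := by rw [hA, Matrix.mul_assoc, hU, Matrix.mul_one]
  calc D * (A + (V - U) * S * (V - U)ᴴ) = D * A + V * S * Vᴴ - V * S * Uᴴ := by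
        rw [Matrix.mul_add, ← Matrix.mul_assoc, ← Matrix.mul_assoc, Matrix.mul_sub, hDU, hDV,
          sub_zero, conjTranspose_sub, Matrix.mul_sub, add_sub_assoc]
    _ = D * A * D + V * S * Vᴴ := by
        rw [← hA, eq_sub_of_add_eq' hDE, Matrix.mul_sub, Matrix.mul_one]; abel
    _ = D * A * (D + U * Vᴴ) := by
        rw [Matrix.mul_add, ← Matrix.mul_assoc, hDAU]

end Splitting

/-- `U S Vᴴ` is the factorization `A₂₁ = UΣV*` of the block of `A` with rows in `¬ P` and
columns in `P`, with `U` supported on the rows `¬ P` and `V` on the rows `P`. -/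
structure IsOffDiagFactorization [Fintype κ] [Mul R] [AddCommMonoid R] [Star R]
    (P : ι → Prop) (A : Matrix ι ι R) (U V : Matrix ι κ R) (S : Matrix κ κ R) : Prop where
  left_eq_zero : ∀ i, P i → ∀ c, U i c = 0
  right_eq_zero : ∀ i, ¬ P i → ∀ c, V i c = 0
  apply_eq : ∀ i j, ¬ P i → P j → A i j = (U * S * Vᴴ) i j

namespace IsOffDiagFactorization

variable [Fintype κ] [Ring R] [StarRing R]
  {P : ι → Prop} {A : Matrix ι ι R} {U V : Matrix ι κ R} {S : Matrix κ κ R}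

theorem symm (h : IsOffDiagFactorization P A U V S) (hA : A.IsHermitian) (hS : S.IsHermitian) :
    IsOffDiagFactorization (¬ P ·) A V U S where
  left_eq_zero := h.right_eq_zero
  right_eq_zero i hi := h.left_eq_zero i (not_not.1 hi)
  apply_eq i j hi hj :=
    calc A i j = star (A j i) := (hA.apply i j).symm
      _ = star ((U * S * Vᴴ) j i) := by rw [h.apply_eq j i hj (not_not.1 hi)]
      _ = (V * S * Uᴴ) i j := by
        rw [← conjTranspose_apply, conjTranspose_mul, conjTranspose_mul,
          conjTranspose_conjTranspose, hS.eq, Matrix.mul_assoc]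

variable [Fintype ι] [DecidableEq ι] [DecidablePred P]

theorem blockProj_not_mul_mul_blockProj (h : IsOffDiagFactorization P A U V S) :
    (blockProj (¬ P ·) : Matrix ι ι R) * A * blockProj P = U * S * Vᴴ := by
  have hU : (blockProj (¬ P ·) : Matrix ι ι R) * U = U :=
    blockProj_mul_eq_self _ fun i hi => h.left_eq_zero i (not_not.1 hi)
  have hV : Vᴴ * (blockProj P : Matrix ι ι R) = Vᴴ := by
    simpa only [conjTranspose_mul, conjTranspose_blockProj] using
      congrArg conjTranspose (blockProj_mul_eq_self P h.right_eq_zero)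
  calc (blockProj (¬ P ·) : Matrix ι ι R) * A * blockProj P
        = blockProj (¬ P ·) * (U * S * Vᴴ) * blockProj P :=
          blockProj_mul_mul_blockProj_congr _ _ h.apply_eq
    _ = U * S * Vᴴ := by
          rw [← Matrix.mul_assoc, ← Matrix.mul_assoc, hU, Matrix.mul_assoc, hV]

theorem blockProj_mul_mul_blockProj_not (h : IsOffDiagFactorization P A U V S)
    (hA : A.IsHermitian) (hS : S.IsHermitian) :
    (blockProj P : Matrix ι ι R) * A * blockProj (¬ P ·) = V * S * Uᴴ := by
  simpa only [blockProj_not_not] using (h.symm hA hS).blockProj_not_mul_mul_blockProj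

theorem apply_add_eq_zero (h : IsOffDiagFactorization P A U V S) (hA : A.IsHermitian)
    (hS : S.IsHermitian) {i j : ι} (hi : P i) (hj : ¬ P j) :
    (A + (V - U) * S * (V - U)ᴴ) i j = 0 := by
  have hzero := mul_add_sub_mul_conjTranspose_sub_mul (blockProj_add_blockProj_not P)
    (conjTranspose_blockProj _) (blockProj_mul_eq_zero P h.left_eq_zero)
    (blockProj_mul_eq_self P h.right_eq_zero) (h.blockProj_mul_mul_blockProj_not hA hS)
  simpa [blockProj_mul_mul_blockProj_apply, hi, hj] using congrFun (congrFun hzero i) j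

theorem blockProj_mul_add [DecidableEq κ] (h : IsOffDiagFactorization P A U V S)
    (hA : A.IsHermitian) (hS : S.IsHermitian) (hU : Uᴴ * U = 1) :
    (blockProj P : Matrix ι ι R) * (A + (V - U) * S * (V - U)ᴴ) =
      blockProj P * A * (blockProj P + U * Vᴴ) :=
  mul_add_sub_mul_conjTranspose_sub (blockProj_add_blockProj_not P)
    (blockProj_mul_eq_zero P h.left_eq_zero) (blockProj_mul_eq_self P h.right_eq_zero) hU
    (h.blockProj_mul_mul_blockProj_not hA hS)

end IsOffDiagFactorization

end Matrix

namespace ClusterTree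

variable {n p : ℕ} (T : ClusterTree n p)

theorem forall_mem_lt_or_forall_mem_le {ℓ : ℕ} (hℓ : 1 ≤ ℓ) (i : ℕ) :
    (∀ j, T.mem ℓ i j → j.val < T.N (2 ^ (p - 1))) ∨
      (∀ j, T.mem ℓ i j → T.N (2 ^ (p - 1)) ≤ j.val) := by
  obtain ⟨c, hc⟩ : 2 ^ (p - ℓ) ∣ 2 ^ (p - 1) := Nat.pow_dvd_pow 2 (by omega)
  rcases Nat.lt_or_ge i c with hi | hi
  · refine Or.inl fun j hj => hj.2.trans_le (T.mono ?_)
    rw [hc, mul_comm]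
    exact Nat.mul_le_mul_left _ hi
  · refine Or.inr fun j hj => (T.mono ?_).trans hj.1
    rw [hc, mul_comm]
    exact Nat.mul_le_mul_right _ hi

theorem blockCol_eq_conjTranspose_blockRow {A : Matrix (Fin n) (Fin n) ℂ} (hA : A.IsHermitian)
    (ℓ i : ℕ) : T.blockCol A ℓ i = (T.blockRow A ℓ i)ᴴ := by
  ext a c
  exact (hA.apply a c).symm

theorem rank_blockRow_le_of_apply_eq_mul {A A₀ M : Matrix (Fin n) (Fin n) ℂ} {ℓ i : ℕ}
    (hrow : ∀ a, T.mem ℓ i a → ∀ j, A₀ a j = (A * M) a j)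
    (hM : ∀ t j, T.mem ℓ i t → ¬ T.mem ℓ i j → M t j = 0) :
    (T.blockRow A₀ ℓ i).rank ≤ (T.blockRow A ℓ i).rank := by
  have h : T.blockRow A₀ ℓ i = (A * M).submatrix Subtype.val Subtype.val := by
    ext a j
    exact hrow a a.2 j
  rw [h]
  exact rank_submatrix_mul_le A M (T.mem ℓ i) Subtype.val hM

theorem rank_blockRow_le_of_blockProj_mul_eq {r : ℕ} {A A₀ : Matrix (Fin n) (Fin n) ℂ}
    {ℓ i : ℕ} (Q : Fin n → Prop) [DecidablePred Q] (hQ : ∀ t, T.mem ℓ i t → Q t)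
    {X Y : Matrix (Fin n) (Fin r) ℂ} (hX : (blockProj Q : Matrix (Fin n) (Fin n) ℂ) * X = 0)
    (hrow : blockProj Q * A₀ = blockProj Q * A * (blockProj Q + X * Yᴴ)) :
    (T.blockRow A₀ ℓ i).rank ≤ (T.blockRow A ℓ i).rank := by
  refine T.rank_blockRow_le_of_apply_eq_mul (M := blockProj Q + X * Yᴴ) (fun a ha j => ?_)
    fun t j ht hj => ?_
  · have h := congrFun (congrFun hrow a) j
    rwa [Matrix.mul_assoc, blockProj_mul_apply, blockProj_mul_apply, if_pos (hQ a ha),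
      if_pos (hQ a ha)] at h
  · have hXY : (X * Yᴴ) t j = 0 :=
      calc (X * Yᴴ) t j = ((blockProj Q : Matrix (Fin n) (Fin n) ℂ) * X * Yᴴ) t j := by
            rw [Matrix.mul_assoc, blockProj_mul_apply, if_pos (hQ t ht)]
        _ = 0 := by rw [hX, Matrix.zero_mul, Matrix.zero_apply]
    rw [Matrix.add_apply, blockProj_apply_of_ne Q (fun h : t = j => hj (h ▸ ht)), hXY, zero_add]

theorem IsHSS.of_rank_blockRow_le {k : ℕ} {A A₀ : Matrix (Fin n) (Fin n) ℂ} (hA : T.IsHSS k A)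
    (hA₀ : A₀.IsHermitian)
    (h : ∀ ℓ i, 1 ≤ ℓ → (T.blockRow A₀ ℓ i).rank ≤ (T.blockRow A ℓ i).rank) :
    T.IsHSS k A₀ := by
  intro ℓ i hℓ hℓp hi
  have hrow := (h ℓ i hℓ).trans (hA ℓ i hℓ hℓp hi).1
  rw [T.blockCol_eq_conjTranspose_blockRow hA₀, rank_conjTranspose]
  exact ⟨hrow, hrow⟩

end ClusterTree

theorem posdef_rank_k_splitting_general {n p k r : ℕ}
    (T : ClusterTree n p)
    (A : Matrix (Fin n) (Fin n) ℂ) (hPD : A.PosDef) (hHSS : T.IsHSS k A)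
    (U V : Matrix (Fin n) (Fin r) ℂ) (σ : Fin r → ℝ) (hσ : ∀ c, 0 < σ c)
    (hUsupp : ∀ i : Fin n, i.val < T.N (2 ^ (p - 1)) → ∀ c, U i c = 0)
    (hVsupp : ∀ i : Fin n, T.N (2 ^ (p - 1)) ≤ i.val → ∀ c, V i c = 0)
    (hUorth : Uᴴ * U = 1) (hVorth : Vᴴ * V = 1)
    (hSVD : ∀ i j : Fin n, T.N (2 ^ (p - 1)) ≤ i.val → j.val < T.N (2 ^ (p - 1)) →
      A i j = (U * Matrix.diagonal (fun c => (σ c : ℂ)) * Vᴴ) i j) :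
    letI S := Matrix.diagonal (fun c => (σ c : ℂ))
    letI A₀ := A - (V - U) * S * (U - V)ᴴ
    A = A₀ + (V - U) * S * (U - V)ᴴ ∧
      A₀.PosDef ∧
      (∀ i j : Fin n,
        ¬((i.val < T.N (2 ^ (p - 1)) ∧ j.val < T.N (2 ^ (p - 1))) ∨
          (T.N (2 ^ (p - 1)) ≤ i.val ∧ T.N (2 ^ (p - 1)) ≤ j.val)) → A₀ i j = 0) ∧
      T.IsHSS k A₀ := by
  set S : Matrix (Fin r) (Fin r) ℂ := diagonal fun c => (σ c : ℂ)
  set A₀ := A - (V - U) * S * (U - V)ᴴ with hA₀_def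
  set P : Fin n → Prop := fun i => i.val < T.N (2 ^ (p - 1))
  have hS : S.IsHermitian := isHermitian_diagonal_of_self_adjoint _ (by ext; simp)
  have h : IsOffDiagFactorization P A U V S :=
    ⟨hUsupp, fun i hi => hVsupp i (not_lt.1 hi), fun i j hi hj => hSVD i j (not_lt.1 hi) hj⟩
  have h' := h.symm hPD.1 hS
  have hA₀ : A₀ = A + (V - U) * S * (V - U)ᴴ := by
    rw [hA₀_def, ← neg_sub V U, conjTranspose_neg, Matrix.mul_neg, sub_neg_eq_add]
  have hA₀' : A₀ = A + (U - V) * S * (U - V)ᴴ := by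
    rw [hA₀, sub_mul_mul_conjTranspose_sub_comm]
  have hPD₀ : A₀.PosDef := by
    rw [hA₀]
    refine hPD.add_posSemidef (PosSemidef.mul_mul_conjTranspose_same ?_ _)
    exact posSemidef_diagonal_iff.2 fun c => by exact_mod_cast (hσ c).le
  refine ⟨(sub_add_cancel _ _).symm, hPD₀, fun i j hij => ?_,
    hHSS.of_rank_blockRow_le T hPD₀.1 fun ℓ i hℓ => ?_⟩
  · by_cases hi : P i
    · rw [hA₀]; exact h.apply_add_eq_zero hPD.1 hS hi fun hj => hij (Or.inl ⟨hi, hj⟩)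
    · rw [hA₀']
      exact h'.apply_add_eq_zero hPD.1 hS hi fun hj => hij (Or.inr ⟨not_lt.1 hi, not_lt.1 hj⟩)
  · rcases T.forall_mem_lt_or_forall_mem_le hℓ i with hI | hI
    · refine T.rank_blockRow_le_of_blockProj_mul_eq P hI (Y := V)
        (blockProj_mul_eq_zero P h.left_eq_zero) ?_
      rw [hA₀]; exact h.blockProj_mul_add hPD.1 hS hUorth
    · refine T.rank_blockRow_le_of_blockProj_mul_eq _ (fun j hj => not_lt.2 (hI j hj)) (Y := U)
        (blockProj_mul_eq_zero _ h'.left_eq_zero) ?_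
      rw [hA₀']; exact h'.blockProj_mul_add hPD.1 hS hVorth

/-- Rank-reducing splitting in the Hermitian positive definite case: with
`A₂₁ = U Σ V*` an SVD of the subdiagonal block (here encoded inside `n × n`
matrices, `V` supported on the first level-1 block and `U` on the second),
the matrix `A₀ := A - (V-U) Σ (U-V)ᴴ` (i.e. `A = A₀ + [V;-U] Σ [-V;U]ᴴ`) is
block diagonal at level 1, Hermitian positive definite, and is again a
`(T_p,k)`-HSS matrix whenever `A` is. -/
theorem posdef_rank_k_splitting {n p k r : ℕ} (hp : 1 ≤ p)
    (T : ClusterTree n p)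
    (A : Matrix (Fin n) (Fin n) ℂ) (hPD : A.PosDef) (hHSS : T.IsHSS k A)
    (U V : Matrix (Fin n) (Fin r) ℂ) (σ : Fin r → ℝ) (hσ : ∀ c, 0 < σ c)
    (hUsupp : ∀ i : Fin n, i.val < T.N (2 ^ (p - 1)) → ∀ c, U i c = 0)
    (hVsupp : ∀ i : Fin n, T.N (2 ^ (p - 1)) ≤ i.val → ∀ c, V i c = 0)
    (hUorth : Uᴴ * U = 1) (hVorth : Vᴴ * V = 1)
    (hSVD : ∀ i j : Fin n, T.N (2 ^ (p - 1)) ≤ i.val → j.val < T.N (2 ^ (p - 1)) →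
      A i j = (U * Matrix.diagonal (fun c => (σ c : ℂ)) * Vᴴ) i j) :
    letI S := Matrix.diagonal (fun c => (σ c : ℂ))
    letI A₀ := A - (V - U) * S * (U - V)ᴴ
    A = A₀ + (V - U) * S * (U - V)ᴴ ∧
      A₀.PosDef ∧
      (∀ i j : Fin n,
        ¬((i.val < T.N (2 ^ (p - 1)) ∧ j.val < T.N (2 ^ (p - 1))) ∨
          (T.N (2 ^ (p - 1)) ≤ i.val ∧ T.N (2 ^ (p - 1)) ≤ j.val)) → A₀ i j = 0) ∧
      T.IsHSS k A₀ :=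
  posdef_rank_k_splitting_general T A hPD hHSS U V σ hσ hUsupp hVsupp hUorth hVorth hSVD
end

section
/- Let A ∈ ℂ^{q×q} be a (T_p,k_A)-HSS matrix and B ∈ ℂ^{m×m} have rank k_B. Then the Kronecker product A ⊗ B is a (T_p^{(m)}, k_A·k_B)-HSS matrix with respect to the cluster tree obtained by multiplying all block sizes of T_p by m. -/
open Matrix
open scoped Matrix.Norms.L2Operator

open Kronecker

/-!
Since the breakpoints of `T_p^{(m)}` are `m` times those of `T_p`, the index `e (i, s)` lies in
a node of `T_p^{(m)}` exactly when `i` lies in the same node of `T_p`. Hence every HSS block row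
of `A ⊗ B` is, up to reindexing, the Kronecker product of the corresponding block row of `A` with
`B`, and rank factorizations `A₀ = C D`, `B = C' D'` give `A₀ ⊗ B = (C ⊗ C') (D ⊗ D')`, so its rank
is at most `rank A₀ · rank B`. Block columns are block rows of the transposes.
-/

theorem Matrix.exists_eq_mul_of_rank {K m n : Type*} [Field K] [Fintype m] [Fintype n]
    (M : Matrix m n K) :
    ∃ (C : Matrix m (Fin M.rank) K) (D : Matrix (Fin M.rank) n K), M = C * D := by
  classical
  let b := Module.finBasis K (LinearMap.range M.mulVecLin)
  have hcol (j : n) : M.col j ∈ LinearMap.range M.mulVecLin :=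
    ⟨Pi.single j 1, by simp⟩
  refine ⟨Matrix.of fun i k => (b k : m → K) i, Matrix.of fun k j => b.repr ⟨M.col j, hcol j⟩ k, ?_⟩
  ext i j
  conv_lhs => rw [← M.col_apply j i, ← Subtype.coe_mk (M.col j) (hcol j),
    ← b.sum_repr ⟨M.col j, hcol j⟩]
  simp only [Submodule.coe_sum, Finset.sum_apply, Submodule.coe_smul, Pi.smul_apply, smul_eq_mul,
    Matrix.mul_apply, Matrix.of_apply, mul_comm]
  rfl

theorem Matrix.rank_kronecker_le {K l m n p : Type*} [Field K] [Fintype l] [Fintype m]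
    [Fintype n] [Fintype p] (A : Matrix l m K) (B : Matrix n p K) :
    (A ⊗ₖ B).rank ≤ A.rank * B.rank := by
  obtain ⟨C, D, hA⟩ := A.exists_eq_mul_of_rank
  obtain ⟨C', D', hB⟩ := B.exists_eq_mul_of_rank
  have h : A ⊗ₖ B = C ⊗ₖ C' * D ⊗ₖ D' := by rw [← Matrix.mul_kronecker_mul, ← hA, ← hB]
  calc (A ⊗ₖ B).rank ≤ (C ⊗ₖ C').rank := h ▸ Matrix.rank_mul_le_left _ _
    _ ≤ Fintype.card (Fin A.rank × Fin B.rank) := Matrix.rank_le_card_width _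
    _ = A.rank * B.rank := by simp

namespace ClusterTree

section Kronecker

variable {q m p : ℕ} {T : ClusterTree q p} {Tm : ClusterTree (q * m) p}
  {e : Fin q × Fin m ≃ Fin (q * m)}

theorem mem_kronecker_iff (hTm : ∀ j, Tm.N j = m * T.N j)
    (he : ∀ (i : Fin q) (s : Fin m), ((e (i, s)) : ℕ) = i.val * m + s.val)
    (ℓ a : ℕ) (i : Fin q) (s : Fin m) :
    Tm.mem ℓ a (e (i, s)) ↔ T.mem ℓ a i := by
  have hs := s.isLt
  simp only [mem, hTm, he]
  constructor
  · rintro ⟨h₁, h₂⟩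
    exact ⟨by nlinarith, by nlinarith⟩
  · rintro ⟨h₁, h₂⟩
    exact ⟨by nlinarith, by nlinarith⟩

def memKroneckerEquiv (hTm : ∀ j, Tm.N j = m * T.N j)
    (he : ∀ (i : Fin q) (s : Fin m), ((e (i, s)) : ℕ) = i.val * m + s.val) (ℓ a : ℕ) :
    {x // Tm.mem ℓ a x} ≃ {i // T.mem ℓ a i} × Fin m :=
  (e.subtypeEquiv fun x => (mem_kronecker_iff hTm he ℓ a x.1 x.2).symm).symm.trans
    Equiv.prodSubtypeFstEquivSubtypeProd

def notMemKroneckerEquiv (hTm : ∀ j, Tm.N j = m * T.N j)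
    (he : ∀ (i : Fin q) (s : Fin m), ((e (i, s)) : ℕ) = i.val * m + s.val) (ℓ a : ℕ) :
    {x // ¬ Tm.mem ℓ a x} ≃ {i // ¬ T.mem ℓ a i} × Fin m :=
  (e.subtypeEquiv fun x => (mem_kronecker_iff hTm he ℓ a x.1 x.2).not.symm).symm.trans
    Equiv.prodSubtypeFstEquivSubtypeProd

theorem blockRow_reindex_kronecker (hTm : ∀ j, Tm.N j = m * T.N j)
    (he : ∀ (i : Fin q) (s : Fin m), ((e (i, s)) : ℕ) = i.val * m + s.val) (ℓ a : ℕ)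
    (A : Matrix (Fin q) (Fin q) ℂ) (B : Matrix (Fin m) (Fin m) ℂ) :
    Tm.blockRow (Matrix.reindex e e (A ⊗ₖ B)) ℓ a =
      Matrix.reindex (memKroneckerEquiv hTm he ℓ a).symm (notMemKroneckerEquiv hTm he ℓ a).symm
        (T.blockRow A ℓ a ⊗ₖ B) :=
  rfl

theorem rank_blockRow_reindex_kronecker_le (hTm : ∀ j, Tm.N j = m * T.N j)
    (he : ∀ (i : Fin q) (s : Fin m), ((e (i, s)) : ℕ) = i.val * m + s.val) (ℓ a : ℕ)
    (A : Matrix (Fin q) (Fin q) ℂ) (B : Matrix (Fin m) (Fin m) ℂ) :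
    (Tm.blockRow (Matrix.reindex e e (A ⊗ₖ B)) ℓ a).rank ≤ (T.blockRow A ℓ a).rank * B.rank := by
  rw [blockRow_reindex_kronecker hTm he ℓ a, Matrix.rank_reindex]
  exact Matrix.rank_kronecker_le _ _

end Kronecker

theorem blockCol_eq_transpose_blockRow_transpose {n p : ℕ} (T : ClusterTree n p)
    (A : Matrix (Fin n) (Fin n) ℂ) (ℓ i : ℕ) : T.blockCol A ℓ i = (T.blockRow Aᵀ ℓ i)ᵀ :=
  rfl

end ClusterTree

/-- Kronecker products with HSS matrices: if `A` is a `(T_p, k_A)`-HSS matrix of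
size `q` and `B` has rank at most `k_B`, then `A ⊗ B` is a
`(T_p^{(m)}, k_A·k_B)`-HSS matrix, where `T_p^{(m)}` is the cluster tree with all
block sizes of `T_p` multiplied by `m` (the Kronecker index `(i,s)` corresponds to
the linear index `i·m + s`). -/
theorem kronecker_hss_rank {q m p kA kB : ℕ}
    (T : ClusterTree q p) (Tm : ClusterTree (q * m) p)
    (hTm : ∀ j, Tm.N j = m * T.N j)
    (A : Matrix (Fin q) (Fin q) ℂ) (hA : T.IsHSS kA A)
    (B : Matrix (Fin m) (Fin m) ℂ) (hB : B.rank ≤ kB)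
    (e : Fin q × Fin m ≃ Fin (q * m))
    (he : ∀ (i : Fin q) (s : Fin m), ((e (i, s)) : ℕ) = i.val * m + s.val) :
    Tm.IsHSS (kA * kB) (Matrix.reindex e e (A ⊗ₖ B)) := by
  intro ℓ i hℓ₁ hℓ₂ hi
  obtain ⟨hrow, hcol⟩ := hA ℓ i hℓ₁ hℓ₂ hi
  rw [T.blockCol_eq_transpose_blockRow_transpose, Matrix.rank_transpose] at hcol
  have hBt : Bᵀ.rank ≤ kB := (Matrix.rank_transpose B).symm ▸ hB
  have htranspose : (Matrix.reindex e e (A ⊗ₖ B))ᵀ = Matrix.reindex e e (Aᵀ ⊗ₖ Bᵀ) := rfl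
  constructor
  · exact (ClusterTree.rank_blockRow_reindex_kronecker_le hTm he ℓ i A B).trans
      (Nat.mul_le_mul hrow hB)
  · rw [Tm.blockCol_eq_transpose_blockRow_transpose, Matrix.rank_transpose, htranspose]
    exact (ClusterTree.rank_blockRow_reindex_kronecker_le hTm he ℓ i Aᵀ Bᵀ).trans
      (Nat.mul_le_mul hcol hBt)
end

section
/- Let Π be the perfect shuffle permutation satisfying Π(X ⊗ Y)Π* = Y ⊗ X for all X ∈ ℂ^{2×2}, Y ∈ ℂ^{q×q}. Then for A = [[0, −M^{-1}K],[I_q, −M^{-1}L]] one has ΠAΠ* = I_q ⊗ E₂₁ − M^{-1}K ⊗ E₁₂ − M^{-1}L ⊗ E₂₂, where E_{ij} are the 2×2 matrix units. Consequently, if M^{-1}K is (T_p,k₁)-HSS and M^{-1}L is (T_p,k₂)-HSS, then ΠAΠ* is a (T_p^{(2)}, k₁+k₂)-HSS matrix. -/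
open Matrix
open scoped Matrix.Norms.L2Operator

open Kronecker

/-!
Conjugation by the shuffle swaps the Kronecker factors of each of the three terms of `A`.
Under the interleaving `e (i, s) = 2 i + s` the nodes of `T₂` are exactly the preimages of the
nodes of `T`, so every HSS block of the reindexed `C ⊗ X` is a submatrix of the corresponding
HSS block of `C`, tensored with `X`; its rank is thus at most `k · rank X ≤ k` for a matrix
unit `X`. The HSS blocks of `I_q` vanish, and HSS ranks add under subtraction.
-/

namespace Matrix

variable {K : Type*} [Field K] {m n m' n' : Type*} [Fintype n]

theorem rank_add_le_s19 (A B : Matrix m n K) : (A + B).rank ≤ A.rank + B.rank := by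
  rw [rank, rank, rank, mulVecLin_add]
  calc Module.finrank K (LinearMap.range (A.mulVecLin + B.mulVecLin))
      ≤ Module.finrank K ↥(LinearMap.range A.mulVecLin ⊔ LinearMap.range B.mulVecLin) :=
        Submodule.finrank_mono (LinearMap.range_add_le _ _)
    _ ≤ _ := Submodule.finrank_add_le_finrank_add_finrank _ _

theorem rank_neg (A : Matrix m n K) : (-A).rank = A.rank := by
  have hneg : (-A).mulVecLin = -A.mulVecLin := LinearMap.ext fun v => neg_mulVec v A
  rw [rank, rank, hneg, LinearMap.range_neg]

theorem rank_sub_le (A B : Matrix m n K) : (A - B).rank ≤ A.rank + B.rank := by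
  simpa only [sub_eq_add_neg, rank_neg] using rank_add_le_s19 A (-B)

theorem rank_single_le_one [DecidableEq m] [DecidableEq n] (i : m) (j : n) (c : K) :
    (single i j c).rank ≤ 1 := by
  refine rank_le_card_of_support_subset _ {i} fun i' hi' => ?_
  rw [Finset.coe_singleton, Set.mem_singleton_iff]
  by_contra hne
  exact hi' (funext fun j' => by simp [Ne.symm hne])

theorem rank_kronecker_le_s19 [Fintype m] [Fintype m'] [Fintype n'] [DecidableEq n] [DecidableEq n']
    (A : Matrix m n K) (B : Matrix m' n' K) : (A ⊗ₖ B).rank ≤ A.rank * B.rank := by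
  rw [rank_eq_finrank_range_toLin (A ⊗ₖ B) ((Pi.basisFun K m).tensorProduct (Pi.basisFun K m'))
      ((Pi.basisFun K n).tensorProduct (Pi.basisFun K n')), toLin_kronecker,
    A.rank_eq_finrank_range_toLin (Pi.basisFun K m) (Pi.basisFun K n),
    B.rank_eq_finrank_range_toLin (Pi.basisFun K m') (Pi.basisFun K n'),
    ← Module.finrank_tensorProduct]
  set f := toLin (Pi.basisFun K n) (Pi.basisFun K m) A
  set g := toLin (Pi.basisFun K n') (Pi.basisFun K m') B
  have hfactor : TensorProduct.map f g =
      TensorProduct.mapIncl (LinearMap.range f) (LinearMap.range g) ∘ₗ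
        TensorProduct.map f.rangeRestrict g.rangeRestrict := by
    rw [← TensorProduct.map_comp]; rfl
  calc Module.finrank K (LinearMap.range (TensorProduct.map f g))
      ≤ Module.finrank K (LinearMap.range
          (TensorProduct.mapIncl (LinearMap.range f) (LinearMap.range g))) :=
        Submodule.finrank_mono (hfactor ▸ LinearMap.range_comp_le_range _ _)
    _ ≤ _ := LinearMap.finrank_range_le _

end Matrix

namespace ClusterTree

variable {n p : ℕ} {T : ClusterTree n p} {k k' : ℕ} {A B : Matrix (Fin n) (Fin n) ℂ}

theorem IsHSS.mono (hA : T.IsHSS k A) (hk : k ≤ k') : T.IsHSS k' A := fun ℓ i h₁ h₂ hi =>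
  ⟨(hA ℓ i h₁ h₂ hi).1.trans hk, (hA ℓ i h₁ h₂ hi).2.trans hk⟩

theorem IsHSS.sub (hA : T.IsHSS k A) (hB : T.IsHSS k' B) : T.IsHSS (k + k') (A - B) :=
  fun ℓ i h₁ h₂ hi =>
    ⟨(rank_sub_le _ _).trans (add_le_add (hA ℓ i h₁ h₂ hi).1 (hB ℓ i h₁ h₂ hi).1),
      (rank_sub_le _ _).trans (add_le_add (hA ℓ i h₁ h₂ hi).2 (hB ℓ i h₁ h₂ hi).2)⟩

theorem isHSS_one (T : ClusterTree n p) : T.IsHSS 0 1 := by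
  intro ℓ i _ _ _
  have hrow : T.blockRow 1 ℓ i = 0 := by
    ext a c
    exact Matrix.one_apply_ne fun h => c.2 (h ▸ a.2)
  have hcol : T.blockCol 1 ℓ i = 0 := by
    ext a c
    exact Matrix.one_apply_ne fun h => a.2 (h ▸ c.2)
  simp [hrow, hcol]

section Refinement

variable {q d : ℕ} (T₂ : ClusterTree (q * d) p) (T : ClusterTree q p)
  (hT₂ : ∀ j, T₂.N j = d * T.N j)
  (e : Fin q × Fin d ≃ Fin (q * d)) (he : ∀ (i : Fin q) (s : Fin d), (e (i, s) : ℕ) = i * d + s)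
include hT₂ he

theorem mem_iff_mem_fst_symm (ℓ a : ℕ) (j : Fin (q * d)) :
    T₂.mem ℓ a j ↔ T.mem ℓ a (e.symm j).1 := by
  obtain ⟨⟨i, s⟩, rfl⟩ := e.surjective j
  have hd : 0 < d := s.pos
  have hdiv : (i * d + s : ℕ) / d = i := by
    rw [Nat.mul_comm, Nat.mul_add_div hd, Nat.div_eq_of_lt s.isLt, Nat.add_zero]
  rw [Equiv.symm_apply_apply]
  unfold mem
  rw [hT₂, hT₂, he, Nat.mul_comm d, Nat.mul_comm d, ← Nat.le_div_iff_mul_le hd,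
    ← Nat.div_lt_iff_lt_mul hd, hdiv]

theorem IsHSS.reindex_kronecker {k : ℕ} {C : Matrix (Fin q) (Fin q) ℂ} (hC : T.IsHSS k C)
    (X : Matrix (Fin d) (Fin d) ℂ) :
    T₂.IsHSS (k * X.rank) (Matrix.reindex e e (C ⊗ₖ X)) := by
  intro ℓ a h₁ h₂ ha
  have hmem := mem_iff_mem_fst_symm T₂ T hT₂ e he ℓ a
  have hrow : T₂.blockRow (Matrix.reindex e e (C ⊗ₖ X)) ℓ a =
      (T.blockRow C ℓ a ⊗ₖ X).submatrix
        (fun x => (⟨(e.symm x.1).1, (hmem x.1).1 x.2⟩, (e.symm x.1).2))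
        (fun y => (⟨(e.symm y.1).1, fun h => y.2 ((hmem y.1).2 h)⟩, (e.symm y.1).2)) := rfl
  have hcol : T₂.blockCol (Matrix.reindex e e (C ⊗ₖ X)) ℓ a =
      (T.blockCol C ℓ a ⊗ₖ X).submatrix
        (fun x => (⟨(e.symm x.1).1, fun h => x.2 ((hmem x.1).2 h)⟩, (e.symm x.1).2))
        (fun y => (⟨(e.symm y.1).1, (hmem y.1).1 y.2⟩, (e.symm y.1).2)) := rfl
  rw [hrow, hcol]
  exact ⟨(rank_submatrix_le _ _ _).trans <| (rank_kronecker_le_s19 _ _).trans <|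
      Nat.mul_le_mul_right _ (hC ℓ a h₁ h₂ ha).1,
    (rank_submatrix_le _ _ _).trans <| (rank_kronecker_le_s19 _ _).trans <|
      Nat.mul_le_mul_right _ (hC ℓ a h₁ h₂ ha).2⟩

end Refinement

end ClusterTree

theorem shuffled_linearization_hss_general {q p k₁ k₂ : ℕ}
    (M K L : Matrix (Fin q) (Fin q) ℂ)
    (Sh : Matrix (Fin q × Fin 2) (Fin 2 × Fin q) ℂ)
    (hshuffle : ∀ (X : Matrix (Fin 2) (Fin 2) ℂ) (Y : Matrix (Fin q) (Fin q) ℂ),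
      Sh * (X ⊗ₖ Y) * Shᴴ = Y ⊗ₖ X)
    (T : ClusterTree q p) (T₂ : ClusterTree (q * 2) p)
    (hT₂ : ∀ j, T₂.N j = 2 * T.N j)
    (hK : T.IsHSS k₁ (M⁻¹ * K)) (hL : T.IsHSS k₂ (M⁻¹ * L))
    (e : Fin q × Fin 2 ≃ Fin (q * 2))
    (he : ∀ (i : Fin q) (s : Fin 2), ((e (i, s)) : ℕ) = i.val * 2 + s.val) :
    letI E₁₂ : Matrix (Fin 2) (Fin 2) ℂ := Matrix.single 0 1 1
    letI E₂₁ : Matrix (Fin 2) (Fin 2) ℂ := Matrix.single 1 0 1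
    letI E₂₂ : Matrix (Fin 2) (Fin 2) ℂ := Matrix.single 1 1 1
    letI A : Matrix (Fin 2 × Fin q) (Fin 2 × Fin q) ℂ :=
      E₂₁ ⊗ₖ (1 : Matrix (Fin q) (Fin q) ℂ) - E₁₂ ⊗ₖ (M⁻¹ * K) - E₂₂ ⊗ₖ (M⁻¹ * L)
    Sh * A * Shᴴ =
        (1 : Matrix (Fin q) (Fin q) ℂ) ⊗ₖ E₂₁ - (M⁻¹ * K) ⊗ₖ E₁₂ - (M⁻¹ * L) ⊗ₖ E₂₂ ∧
      T₂.IsHSS (k₁ + k₂) (Matrix.reindex e e (Sh * A * Shᴴ)) := by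
  have hI := (ClusterTree.isHSS_one T).reindex_kronecker T₂ T hT₂ e he (single 1 0 1)
  have hK' := hK.reindex_kronecker T₂ T hT₂ e he (single 0 1 1)
  have hL' := hL.reindex_kronecker T₂ T hT₂ e he (single 1 1 1)
  simp only [Matrix.mul_sub, Matrix.sub_mul, hshuffle, true_and, Matrix.reindex_apply,
    Matrix.submatrix_sub]
  refine ((hI.sub hK').sub hL').mono ?_
  rw [zero_mul, zero_add]
  exact add_le_add (mul_le_of_le_one_right' (rank_single_le_one _ _ _))
    (mul_le_of_le_one_right' (rank_single_le_one _ _ _))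

/-- The perfect shuffle of the companion-type linearization
`A = [[0, -M⁻¹K], [I, -M⁻¹L]] = E₂₁ ⊗ I_q - E₁₂ ⊗ M⁻¹K - E₂₂ ⊗ M⁻¹L`:
if `Sh` satisfies `Sh (X ⊗ Y) Sh* = Y ⊗ X` for all `X ∈ ℂ^{2×2}`, `Y ∈ ℂ^{q×q}`,
then `Sh A Sh* = I_q ⊗ E₂₁ - M⁻¹K ⊗ E₁₂ - M⁻¹L ⊗ E₂₂`; consequently, if `M⁻¹K` is
`(T_p,k₁)`-HSS and `M⁻¹L` is `(T_p,k₂)`-HSS, then `Sh A Sh*` is a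
`(T_p^{(2)}, k₁+k₂)`-HSS matrix. -/
theorem shuffled_linearization_hss {q p k₁ k₂ : ℕ}
    (M K L : Matrix (Fin q) (Fin q) ℂ) (hM : IsUnit M.det)
    (Sh : Matrix (Fin q × Fin 2) (Fin 2 × Fin q) ℂ)
    (hShL : Sh * Shᴴ = 1) (hShR : Shᴴ * Sh = 1)
    (hshuffle : ∀ (X : Matrix (Fin 2) (Fin 2) ℂ) (Y : Matrix (Fin q) (Fin q) ℂ),
      Sh * (X ⊗ₖ Y) * Shᴴ = Y ⊗ₖ X)
    (T : ClusterTree q p) (T₂ : ClusterTree (q * 2) p)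
    (hT₂ : ∀ j, T₂.N j = 2 * T.N j)
    (hK : T.IsHSS k₁ (M⁻¹ * K)) (hL : T.IsHSS k₂ (M⁻¹ * L))
    (e : Fin q × Fin 2 ≃ Fin (q * 2))
    (he : ∀ (i : Fin q) (s : Fin 2), ((e (i, s)) : ℕ) = i.val * 2 + s.val) :
    letI E₁₂ : Matrix (Fin 2) (Fin 2) ℂ := Matrix.single 0 1 1
    letI E₂₁ : Matrix (Fin 2) (Fin 2) ℂ := Matrix.single 1 0 1
    letI E₂₂ : Matrix (Fin 2) (Fin 2) ℂ := Matrix.single 1 1 1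
    letI A : Matrix (Fin 2 × Fin q) (Fin 2 × Fin q) ℂ :=
      E₂₁ ⊗ₖ (1 : Matrix (Fin q) (Fin q) ℂ) - E₁₂ ⊗ₖ (M⁻¹ * K) - E₂₂ ⊗ₖ (M⁻¹ * L)
    Sh * A * Shᴴ =
        (1 : Matrix (Fin q) (Fin q) ℂ) ⊗ₖ E₂₁ - (M⁻¹ * K) ⊗ₖ E₁₂ - (M⁻¹ * L) ⊗ₖ E₂₂ ∧
      T₂.IsHSS (k₁ + k₂) (Matrix.reindex e e (Sh * A * Shᴴ)) :=
  shuffled_linearization_hss_general M K L Sh hshuffle T T₂ hT₂ hK hL e he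
end
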